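/- Let w be a cyclic word over the alphabet {0, 1, 2} with no two cyclically adjacent letters equal. Define T₂(w) to be the cyclic word obtained from w by: (a) keeping each occurrence of the letter 2 whose two cyclic neighbors are equal to each other; (b) deleting each occurrence of the letter 2 whose two cyclic neighbors are distinct from each other; and (c) inserting one letter 2 between every cyclically adjacent pair of letters both belonging to {0, 1} (such a pair necessarily consists of one 0 and one 1). Then T₂(w) again has no two cyclically adjacent letters equal, and T₂(T₂(w)) = w. -/

import Mathlib

/-- Cyclic access to a list entry. -/
def cget (w : List (Fin 3)) (i : ℕ) : Fin 3 := w.getD (i % w.length) 0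

/-- No two cyclically adjacent letters are equal. -/
def NoCycAdjEq (w : List (Fin 3)) : Prop :=
  ∀ i < w.length, cget w i ≠ cget w (i + 1)

/-- The contribution of a single letter `c` (with cyclic predecessor `p` and
successor `nx`) to the word `T₂(w)`:
(a) a letter `2` whose two cyclic neighbors are equal is kept;
(b) a letter `2` whose two cyclic neighbors are distinct is deleted;
(c) a letter in `{0,1}` is kept, and a `2` is inserted after it whenever the
next letter also lies in `{0,1}`. -/
def block (p c nx : Fin 3) : List (Fin 3) :=
  if c = 2 then (if p = nx then [2] else []) else c :: (if nx = 2 then [] else [2])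

/-- The cyclic word `T₂(w)`. -/
def T2 (w : List (Fin 3)) : List (Fin 3) :=
  ((List.range w.length).map
    (fun i => block (cget w (i + w.length - 1)) (cget w i) (cget w (i + 1)))).flatten

/-! Rotating `w` so that it starts with a letter other than `2`, it factors into syllables `x` and
`x 2` with `x ∈ {0, 1}`. `T₂` keeps every letter `x` and, writing `x'` for the letter of the next
syllable, replaces the flag `b` ("a `2` follows `x`") by `(x = x') ∨ ¬b`. Since `w` has no
adjacent repetition, `x = x'` forces `b`, and on such admissible flag sequences this map is an
involution. `T₂` commutes with rotations up to rotation, which transfers the result back to `w`. -/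

theorem List.IsRotated.flatten {α : Type*} {l l' : List (List α)} (h : l ~r l') :
    l.flatten ~r l'.flatten := by
  obtain ⟨k, rfl⟩ := h
  rw [List.rotate_eq_drop_append_take_mod, List.flatten_append]
  conv_lhs => rw [← List.take_append_drop (k % l.length) l, List.flatten_append]
  exact List.isRotated_append

theorem List.map_range_rotate {α : Type*} {n : ℕ} (f : ℕ → α) (hf : ∀ i, f (i % n) = f i)
    (k : ℕ) : ((List.range n).map f).rotate k = (List.range n).map fun i => f (i + k) := by
  apply List.ext_getElem (by simp)
  intro i h _
  simp [List.getElem_rotate, hf]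

theorem List.headD_ne {α : Type*} {l : List α} {a z : α} (hz : z ≠ a) (hl : a ∉ l) :
    l.headD z ≠ a := by
  cases l <;> simp_all [eq_comm]

lemma cget_mod_add (w : List (Fin 3)) (i j : ℕ) : cget w (i % w.length + j) = cget w (i + j) := by
  simp [cget, Nat.mod_add_mod]

lemma cget_mod (w : List (Fin 3)) (i : ℕ) : cget w (i % w.length) = cget w i := by
  simpa using cget_mod_add w i 0

lemma cget_rotate (w : List (Fin 3)) (k i : ℕ) : cget (w.rotate k) i = cget w (i + k) := by
  rcases eq_or_ne w [] with rfl | hw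
  · simp [cget]
  have hpos := List.length_pos_iff.mpr hw
  simp only [cget, List.length_rotate, List.getD_eq_getElem?_getD,
    List.getElem?_rotate (Nat.mod_lt _ hpos), Nat.mod_add_mod]

lemma NoCycAdjEq.cget_ne {w : List (Fin 3)} (h : NoCycAdjEq w) (hw : w ≠ []) (i : ℕ) :
    cget w i ≠ cget w (i + 1) := by
  simpa only [cget_mod_add, cget_mod] using
    h (i % w.length) (Nat.mod_lt _ (List.length_pos_iff.mpr hw))

lemma NoCycAdjEq.rotate {w : List (Fin 3)} (h : NoCycAdjEq w) (k : ℕ) :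
    NoCycAdjEq (w.rotate k) := by
  rcases eq_or_ne w [] with rfl | hw
  · simpa using h
  intro i _
  rw [cget_rotate, cget_rotate, add_right_comm]
  exact h.cget_ne hw _

lemma NoCycAdjEq.of_isRotated {w w' : List (Fin 3)} (h : NoCycAdjEq w) (hr : w ~r w') :
    NoCycAdjEq w' := by
  obtain ⟨k, rfl⟩ := hr
  exact h.rotate k

lemma getElem_append_cget_zero (w : List (Fin 3)) (i : ℕ) (hi : i ≤ w.length) :
    (w ++ [cget w 0])[i]'(by simp; omega) = cget w i := by
  rcases hi.lt_or_eq with hi | rfl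
  · simp [List.getElem_append_left hi, cget, Nat.mod_eq_of_lt hi, List.getElem?_eq_getElem hi]
  · simp [cget]

lemma noCycAdjEq_iff_isChain (w : List (Fin 3)) :
    NoCycAdjEq w ↔ List.IsChain (· ≠ ·) (w ++ [cget w 0]) := by
  rw [List.isChain_iff_getElem]
  simp only [List.length_append, List.length_singleton, Nat.add_lt_add_iff_right]
  refine forall_congr' fun i => forall_congr' fun hi => ?_
  rw [getElem_append_cget_zero w i hi.le, getElem_append_cget_zero w (i + 1) hi]

def T2Block (w : List (Fin 3)) (i : ℕ) : List (Fin 3) :=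
  block (cget w (i + w.length - 1)) (cget w i) (cget w (i + 1))

lemma T2_eq_flatten (w : List (Fin 3)) : T2 w = ((List.range w.length).map (T2Block w)).flatten :=
  rfl

lemma T2Block_mod (w : List (Fin 3)) (i : ℕ) : T2Block w (i % w.length) = T2Block w i := by
  rcases eq_or_ne w [] with rfl | hw
  · simp
  have hpos := List.length_pos_iff.mpr hw
  simp only [T2Block, Nat.add_sub_assoc hpos, cget_mod_add, cget_mod]

lemma T2Block_rotate (w : List (Fin 3)) (k i : ℕ) :
    T2Block (w.rotate k) i = T2Block w (i + k) := by
  rcases eq_or_ne w [] with rfl | hw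
  · simp [T2Block, cget]
  have hpos := List.length_pos_iff.mpr hw
  simp only [T2Block, List.length_rotate, cget_rotate]
  congr 2 <;> omega

lemma T2_rotate (w : List (Fin 3)) (k : ℕ) : T2 (w.rotate k) ~r T2 w := by
  rw [T2_eq_flatten, T2_eq_flatten, List.length_rotate,
    show T2Block (w.rotate k) = fun i => T2Block w (i + k) from funext (T2Block_rotate w k),
    ← List.map_range_rotate _ (T2Block_mod w)]
  exact List.IsRotated.flatten (List.IsRotated.forall _ _)

lemma T2_isRotated {w w' : List (Fin 3)} (h : w ~r w') : T2 w ~r T2 w' := by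
  obtain ⟨k, rfl⟩ := h
  exact (T2_rotate w k).symm

/-- `T2` applied to a segment `u` of a cyclic word whose outer neighbours are `p` and `z`. -/
def T2Segment : Fin 3 → List (Fin 3) → Fin 3 → List (Fin 3)
  | _, [], _ => []
  | p, c :: u, z => block p c (u.headD z) ++ T2Segment c u z

lemma T2Segment_eq_flatten (p : Fin 3) (u : List (Fin 3)) (z : Fin 3) :
    T2Segment p u z = ((List.range u.length).map fun i =>
      block ((p :: u).getD i 0) (u.getD i 0) ((u ++ [z]).getD (i + 1) 0)).flatten := by
  induction u generalizing p with
  | nil => rfl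
  | cons c u ih =>
    rw [T2Segment, ih, List.length_cons, List.range_succ_eq_map]
    cases u <;> simp [Function.comp_def]

lemma T2_eq_T2Segment (w : List (Fin 3)) :
    T2 w = T2Segment (cget w (w.length - 1)) w (cget w 0) := by
  rw [T2_eq_flatten, T2Segment_eq_flatten]
  congr 1
  refine List.map_congr_left fun i hi => ?_
  rw [List.mem_range] at hi
  have hprev : cget w (i + w.length - 1) = (cget w (w.length - 1) :: w).getD i 0 := by
    rcases i with _ | i
    · simp
    · have hi' : i < w.length := by omega
      simp [show i + 1 + w.length - 1 = i + w.length by omega, cget, Nat.mod_eq_of_lt hi']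
  have hnext : cget w (i + 1) = (w ++ [cget w 0]).getD (i + 1) 0 := by
    rw [List.getD_eq_getElem _ _ (by simp; omega), getElem_append_cget_zero w (i + 1) hi]
  rw [T2Block, hprev, hnext]
  simp only [cget, Nat.mod_eq_of_lt hi]

def ofSyllables (s : List (Fin 3 × Bool)) : List (Fin 3) :=
  s.flatMap fun q => q.1 :: if q.2 then [2] else []

@[simp]
lemma ofSyllables_nil : ofSyllables [] = [] := rfl

@[simp]
lemma ofSyllables_cons (x : Fin 3) (b : Bool) (s : List (Fin 3 × Bool)) :
    ofSyllables ((x, b) :: s) = x :: ((if b then [2] else []) ++ ofSyllables s) := by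
  simp [ofSyllables]

/-- The action of `T2` on syllables when the letter following the last syllable is `z`. -/
def toggleTwos (z : Fin 3) : List (Fin 3 × Bool) → List (Fin 3 × Bool)
  | [] => []
  | (x, b) :: s => (x, decide (x = (s.map Prod.fst).headD z) || !b) :: toggleTwos z s

def Admissible (z : Fin 3) : List (Fin 3 × Bool) → Prop
  | [] => True
  | (x, b) :: s => (x = (s.map Prod.fst).headD z → b = true) ∧ Admissible z s

lemma head?_ofSyllables (s : List (Fin 3 × Bool)) :
    (ofSyllables s).head? = (s.map Prod.fst).head? := by
  cases s <;> simp [ofSyllables]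

lemma map_fst_toggleTwos (z : Fin 3) (s : List (Fin 3 × Bool)) :
    (toggleTwos z s).map Prod.fst = s.map Prod.fst := by
  induction s with
  | nil => rfl
  | cons q s ih => simp [toggleTwos, ih]

lemma admissible_toggleTwos (z : Fin 3) (s : List (Fin 3 × Bool)) :
    Admissible z (toggleTwos z s) := by
  induction s with
  | nil => trivial
  | cons q s ih => simp_all [toggleTwos, Admissible, map_fst_toggleTwos]

lemma toggleTwos_toggleTwos {z : Fin 3} {s : List (Fin 3 × Bool)} (hs : Admissible z s) :
    toggleTwos z (toggleTwos z s) = s := by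
  induction s with
  | nil => rfl
  | cons q s ih =>
    obtain ⟨x, b⟩ := q
    simp only [Admissible] at hs
    simp only [toggleTwos, map_fst_toggleTwos, ih hs.2]
    by_cases hx : x = (s.map Prod.fst).headD z <;> simp_all

lemma T2Segment_ofSyllables (p : Fin 3) {z : Fin 3} (hz : z ≠ 2) {s : List (Fin 3 × Bool)}
    (hs : 2 ∉ s.map Prod.fst) : T2Segment p (ofSyllables s) z = ofSyllables (toggleTwos z s) := by
  induction s generalizing p with
  | nil => rfl
  | cons q s ih =>
    obtain ⟨x, b⟩ := q
    rw [List.map_cons, List.mem_cons, not_or] at hs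
    have hx : x ≠ 2 := Ne.symm hs.1
    have hnext := List.headD_ne hz hs.2
    simp only [List.headD_eq_head?_getD, List.head?_map] at hnext
    cases b <;> simp [T2Segment, block, toggleTwos, hx, hnext, head?_ofSyllables, ih _ hs.2]

lemma isChain_ofSyllables_iff {z : Fin 3} (hz : z ≠ 2) {s : List (Fin 3 × Bool)}
    (hs : 2 ∉ s.map Prod.fst) : List.IsChain (· ≠ ·) (ofSyllables s ++ [z]) ↔ Admissible z s := by
  induction s with
  | nil => simp [Admissible]
  | cons q s ih =>
    obtain ⟨x, b⟩ := q
    rw [List.map_cons, List.mem_cons, not_or] at hs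
    have hx : x ≠ 2 := Ne.symm hs.1
    have hnext := List.headD_ne hz hs.2
    simp only [List.headD_eq_head?_getD, List.head?_map] at hnext
    cases b <;> simp [Admissible, List.isChain_cons, hx, hnext.symm, head?_ofSyllables, ih hs.2]

lemma exists_ofSyllables_eq : ∀ v : List (Fin 3), List.IsChain (· ≠ ·) v →
    v.head? ≠ some 2 → ∃ s : List (Fin 3 × Bool), 2 ∉ s.map Prod.fst ∧ ofSyllables s = v
  | [], _, _ => ⟨[], by simp, rfl⟩
  | [x], _, hx => ⟨[(x, false)], by simpa [eq_comm] using hx, by simp⟩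
  | x :: y :: v, hc, hhead => by
    rw [List.isChain_cons_cons] at hc
    have hx : x ≠ 2 := by simpa using hhead
    by_cases hy : y = 2
    · subst hy
      have hv : v.head? ≠ some 2 := fun h => (List.isChain_cons.1 hc.2).1 2 h rfl
      obtain ⟨s, hs, hsv⟩ := exists_ofSyllables_eq v hc.2.tail hv
      exact ⟨(x, true) :: s, by simp [hx.symm, hs], by simp [hsv]⟩
    · obtain ⟨s, hs, hsv⟩ := exists_ofSyllables_eq (y :: v) hc.2 (by simpa using hy)
      exact ⟨(x, false) :: s, by simp [hx.symm, hs], by simp [hsv]⟩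

lemma head?_eq_some_cget_zero {w : List (Fin 3)} (hw : w ≠ []) : w.head? = some (cget w 0) := by
  cases w <;> simp_all [cget]

lemma ne_two_of_head? {s : List (Fin 3 × Bool)} (hs : 2 ∉ s.map Prod.fst) {z : Fin 3}
    (hz : (s.map Prod.fst).head? = some z) : z ≠ 2 := by
  rintro rfl
  exact hs (List.mem_of_mem_head? hz)

lemma cget_ofSyllables_zero {s : List (Fin 3 × Bool)} {z : Fin 3}
    (hz : (s.map Prod.fst).head? = some z) : cget (ofSyllables s) 0 = z := by
  rw [← head?_ofSyllables] at hz
  have hne : ofSyllables s ≠ [] := by rintro h; simp [h] at hz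
  simpa [head?_eq_some_cget_zero hne] using hz

lemma T2_ofSyllables {s : List (Fin 3 × Bool)} (hs : 2 ∉ s.map Prod.fst) {z : Fin 3}
    (hz : (s.map Prod.fst).head? = some z) : T2 (ofSyllables s) = ofSyllables (toggleTwos z s) := by
  rw [T2_eq_T2Segment, cget_ofSyllables_zero hz, T2Segment_ofSyllables _ (ne_two_of_head? hs hz) hs]

lemma noCycAdjEq_ofSyllables_iff {s : List (Fin 3 × Bool)} (hs : 2 ∉ s.map Prod.fst) {z : Fin 3}
    (hz : (s.map Prod.fst).head? = some z) : NoCycAdjEq (ofSyllables s) ↔ Admissible z s := by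
  rw [noCycAdjEq_iff_isChain, cget_ofSyllables_zero hz,
    isChain_ofSyllables_iff (ne_two_of_head? hs hz) hs]

lemma exists_isRotated_ofSyllables {w : List (Fin 3)} (hw : NoCycAdjEq w) (hne : w ≠ []) :
    ∃ s z, 2 ∉ s.map Prod.fst ∧ (s.map Prod.fst).head? = some z ∧ w ~r ofSyllables s := by
  obtain ⟨j, hj⟩ : ∃ j, cget w j ≠ 2 := by
    by_contra! h
    exact hw.cget_ne hne 0 (by rw [h 0, h 1])
  have hv : (w.rotate j).head? = some (cget w j) := by
    rw [head?_eq_some_cget_zero (by simpa using hne), cget_rotate, zero_add]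
  obtain ⟨s, hs, hsv⟩ := exists_ofSyllables_eq (w.rotate j)
    ((noCycAdjEq_iff_isChain _).1 (hw.rotate j)).left_of_append (by simpa [hv] using hj)
  exact ⟨s, cget w j, hs, by rw [← head?_ofSyllables, hsv, hv], j, hsv.symm⟩

theorem stmt_7 (w : List (Fin 3)) (hw : NoCycAdjEq w) :
    NoCycAdjEq (T2 w) ∧ T2 (T2 w) ~r w := by
  rcases eq_or_ne w [] with rfl | hne
  · exact ⟨by simp [NoCycAdjEq, T2], List.IsRotated.refl _⟩
  obtain ⟨s, z, hs, hz, hws⟩ := exists_isRotated_ofSyllables hw hne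
  have hadm : Admissible z s := (noCycAdjEq_ofSyllables_iff hs hz).1 (hw.of_isRotated hws)
  have hs' : 2 ∉ (toggleTwos z s).map Prod.fst := by rwa [map_fst_toggleTwos]
  have hz' : ((toggleTwos z s).map Prod.fst).head? = some z := by rwa [map_fst_toggleTwos]
  have hT : T2 w ~r ofSyllables (toggleTwos z s) := by
    simpa only [T2_ofSyllables hs hz] using T2_isRotated hws
  refine ⟨((noCycAdjEq_ofSyllables_iff hs' hz').2 (admissible_toggleTwos z s)).of_isRotated
    hT.symm, ?_⟩
  have hTT : T2 (T2 w) ~r ofSyllables s := by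
    simpa only [T2_ofSyllables hs' hz', toggleTwos_toggleTwos hadm] using T2_isRotated hT
  exact hTT.trans hws.symm
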